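/- Evaluation-context placement for λ_eff^Λ: if Γ ⊢ E^ᾱ : ∀ᾱ.A ⊸ B | ε and Γ, ᾱ; none ⊢ e : A | ⟨⟩, then Γ; none ⊢ E^ᾱ[e] : B | ε, where E^ᾱ[e] denotes the term obtained by filling the hole of E^ᾱ with e and ⟨⟩ is the empty effect. -/

import Mathlib

set_option autoImplicit true
set_option maxHeartbeats 1000000

namespace EffLam

/-! ## Types, effects, schemes -/

/-- Effects: finite sets of effect-operation names. -/
abbrev Eff := Finset ℕ

/-- Types of `λ_eff^Λ` / `λ_eff^let`: type variables, base types, effectful function types. -/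
inductive Ty : Type
  | tvar  : ℕ → Ty
  | base  : ℕ → Ty
  | arrow : Ty → Eff → Ty → Ty

/-- The distinguished base type ⊥. -/
def Ty.bot : Ty := .base 0

/-- Free type variables of a type. -/
def Ty.ftv : Ty → Finset ℕ
  | .tvar a => {a}
  | .base _ => ∅
  | .arrow A _ B => A.ftv ∪ B.ftv

/-- (Partial) type substitutions. -/
abbrev TySubst := ℕ → Option Ty

/-- Remove the variables `as` from the domain of a substitution (for binders). -/
def mask (s : TySubst) (as : List ℕ) : TySubst :=
  fun b => if b ∈ as then none else s b

/-- Simultaneous substitution `[As/as]`. -/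
def subList (as : List ℕ) (As : List Ty) : TySubst :=
  fun b => (as.zip As).lookup b

/-- Single substitution `[A/a]`. -/
def sub1 (a : ℕ) (A : Ty) : TySubst := fun b => if b = a then some A else none

/-- Substituting ⊥ for every variable in `bs`. -/
def botSub (bs : List ℕ) : TySubst := fun a => if a ∈ bs then some Ty.bot else none

/-- Applying a type substitution to a type. -/
def Ty.subst (s : TySubst) : Ty → Ty
  | .tvar a => (s a).getD (.tvar a)
  | .base i => .base i
  | .arrow A ε B => .arrow (A.subst s) ε (B.subst s)

/-- Type schemes `σ ::= A | ∀α.σ`. -/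
inductive Scheme : Type
  | ty  : Ty → Scheme
  | all : ℕ → Scheme → Scheme

/-- Prefix a scheme with quantifiers `∀ᾱ.σ`. -/
def Scheme.allEach (as : List ℕ) (σ : Scheme) : Scheme := as.foldr .all σ

/-- The type scheme `∀ᾱ.A`. -/
def Scheme.close (as : List ℕ) (A : Ty) : Scheme := Scheme.allEach as (.ty A)

/-- Free type variables of a scheme. -/
def Scheme.ftv : Scheme → Finset ℕ
  | .ty A => A.ftv
  | .all a σ => σ.ftv.erase a

/-- (Naive) substitution on schemes. -/
def Scheme.subst (s : TySubst) : Scheme → Scheme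
  | .ty A => .ty (A.subst s)
  | .all a σ => .all a (σ.subst (mask s [a]))

/-- First-order closed types `ι₁ →⟨⟩ ⋯ →⟨⟩ ιₙ` for constants. -/
inductive FirstOrderTy : Ty → Prop
  | base : FirstOrderTy (.base ι)
  | arrow : FirstOrderTy B → FirstOrderTy (.arrow (.base ι) ∅ B)

/-- A global signature: types of constants, the denotation function ζ for constants
(with the assumptions of the paper), and signatures `ty(op) = ∀ᾱ. A ↪ B` of effect
operations. -/
structure Sig where
  tyc : ℕ → Ty
  tyc_fo : ∀ c, FirstOrderTy (tyc c)
  zeta : ℕ → ℕ → Option ℕ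
  zeta_def : ∀ c₁ c₂, (zeta c₁ c₂).isSome ↔
      ∃ ι A, tyc c₁ = .arrow (.base ι) ∅ A ∧ tyc c₂ = .base ι
  zeta_ty : ∀ c₁ c₂ c ι A, zeta c₁ c₂ = some c →
      tyc c₁ = .arrow (.base ι) ∅ A → tyc c = A
  opSig : ℕ → List ℕ × Ty × Ty
  opSig_ftv : ∀ o, (opSig o).2.1.ftv ∪ (opSig o).2.2.ftv ⊆ (opSig o).1.toFinset

/-! ## Typing contexts -/

inductive CtxEntry : Type
  | evar : ℕ → Scheme → CtxEntry
  | tvar : ℕ → CtxEntry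

/-- Typing contexts, with the most recent entry at the head of the list.
`Γ₁, Γ₂` is written `Γ₂ ++ Γ₁`. -/
abbrev Ctx := List CtxEntry

/-- The context `ᾱ` consisting of type-variable declarations. -/
def tvarsCtx (as : List ℕ) : Ctx := as.map .tvar

def CtxEntry.domE : CtxEntry → ℕ ⊕ ℕ
  | .evar x _ => .inl x
  | .tvar a => .inr a

/-- `dom(Γ)`: term variables (inl) and type variables (inr) declared in Γ. -/
def Ctx.dom (Γ : Ctx) : Finset (ℕ ⊕ ℕ) := (Γ.map CtxEntry.domE).toFinset

/-- The type variables declared in Γ. -/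
def Ctx.tvars (Γ : Ctx) : Finset ℕ :=
  Γ.foldr (fun it s => match it with | .tvar a => insert a s | _ => s) ∅

/-- `Γ ⊢ A`. -/
def wfTy (Γ : Ctx) (A : Ty) : Prop := A.ftv ⊆ Ctx.tvars Γ

/-- `Γ ⊢ σ`. -/
def wfScheme (Γ : Ctx) (σ : Scheme) : Prop := σ.ftv ⊆ Ctx.tvars Γ

/-- Well-formedness `⊢ Γ` of typing contexts. -/
inductive CtxWF : Ctx → Prop
  | nil : CtxWF []
  | evar : CtxWF Γ → wfScheme Γ σ → Sum.inl x ∉ Ctx.dom Γ → CtxWF (.evar x σ :: Γ)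
  | tvar : CtxWF Γ → Sum.inr a ∉ Ctx.dom Γ → CtxWF (.tvar a :: Γ)

/-- A context consisting only of type variables (ranged over by Δ in the paper). -/
def TyVarCtx (Γ : Ctx) : Prop := ∀ it ∈ Γ, ∃ a, it = CtxEntry.tvar a

/-- Substitution on context entries / contexts. -/
def CtxEntry.subst (s : TySubst) : CtxEntry → CtxEntry
  | .evar x σ => .evar x (σ.subst s)
  | .tvar a => .tvar a

def Ctx.subst (s : TySubst) (Γ : Ctx) : Ctx := Γ.map (CtxEntry.subst s)

/-! ## Resumption types of λ_eff^Λ -/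

/-- Resumption types `r ::= none | (ᾱ, A, B →ε C)`. -/
abbrev Resum := Option (List ℕ × Ty × Ty × Eff × Ty)

def Resum.tyvars : Resum → Finset ℕ
  | none => ∅
  | some (as, _, _, _, _) => as.toFinset

def Resum.subst (s : TySubst) : Resum → Resum
  | none => none
  | some (as, A, B, ε, C) =>
      some (as, A.subst (mask s as), B.subst (mask s as), ε, C.subst s)

/-- The side condition on resumption types:
`ftv(A) ∪ ftv(B) ⊆ {ᾱ}` and `ftv(C) ∩ {ᾱ} = ∅`. -/
def Resum.WF : Resum → Prop
  | none => True
  | some (as, A, B, _, C) => A.ftv ∪ B.ftv ⊆ as.toFinset ∧ C.ftv ∩ as.toFinset = ∅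
/-! ## Syntax of λ_eff^Λ -/

mutual
/-- Terms of `λ_eff^Λ`.  In `opCont o σs ᾱ w E` (the paper's `#op(σ̄, Λᾱ.w, E^ᾱ)`),
the polymorphic value `Λᾱ.w` is represented by the binder list `ᾱ` and the value `w`. -/
inductive Tm : Type
  | var    : ℕ → List Ty → Tm
  | const  : ℕ → Tm
  | abs    : ℕ → Tm → Tm
  | app    : Tm → Tm → Tm
  | letin  : ℕ → List ℕ → Tm → Tm → Tm
  | op     : ℕ → List Ty → Tm → Tm
  | opCont : ℕ → List Scheme → List ℕ → Tm → ECtx → Tm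
  | handle : Tm → Handler → Tm
  | resume : List ℕ → ℕ → Tm → Tm

/-- Handlers of `λ_eff^Λ`. -/
inductive Handler : Type
  | ret : ℕ → Tm → Handler
  | opH : Handler → List ℕ → ℕ → ℕ → Tm → Handler

/-- Evaluation contexts of `λ_eff^Λ`. -/
inductive ECtx : Type
  | hole : ECtx
  | appL : ECtx → Tm → ECtx
  | appR : Tm → ECtx → ECtx
  | letE : ℕ → List ℕ → ECtx → Tm → ECtx
  | opE  : ℕ → List Ty → ECtx → ECtx
  | handleE : ECtx → Handler → ECtx
end

/-- Values `v ::= c | λx.e`. -/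
inductive IsValue : Tm → Prop
  | const : IsValue (.const c)
  | abs : IsValue (.abs x e)

/-- The type variables `ᾱ` bound above the hole of an evaluation context `E^ᾱ`. -/
def ECtx.binders : ECtx → List ℕ
  | .hole => []
  | .appL E _ => E.binders
  | .appR _ E => E.binders
  | .letE _ as E _ => as ++ E.binders
  | .opE _ _ E => E.binders
  | .handleE E _ => E.binders

/-- Filling the hole of an evaluation context: `E[e]`. -/
def ECtx.fill : ECtx → Tm → Tm
  | .hole, e => e
  | .appL E e₂, e => .app (E.fill e) e₂
  | .appR v E, e => .app v (E.fill e)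
  | .letE x as E e₂, e => .letin x as (E.fill e) e₂
  | .opE o As E, e => .op o As (E.fill e)
  | .handleE E h, e => .handle (E.fill e) h

/-- `ops(h)`: the effect operations handled by `h`. -/
def Handler.ops : Handler → Finset ℕ
  | .ret _ _ => ∅
  | .opH h _ o _ _ => insert o h.ops

/-- `h^return`. -/
def Handler.retClause : Handler → ℕ × Tm
  | .ret x e => (x, e)
  | .opH h _ _ _ _ => h.retClause

/-- `h^op`. -/
def Handler.opClause : Handler → ℕ → Option (List ℕ × ℕ × Tm)
  | .ret _ _, _ => none
  | .opH h as o x e, o' => if o' = o then some (as, x, e) else h.opClause o'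

/-! ### Substitutions and free variables of λ_eff^Λ terms -/

mutual
/-- Type substitution `e[Ā/ᾱ]` on terms. -/
def Tm.tsub (s : TySubst) : Tm → Tm
  | .var x As => .var x (As.map (Ty.subst s))
  | .const c => .const c
  | .abs x e => .abs x (Tm.tsub s e)
  | .app e₁ e₂ => .app (Tm.tsub s e₁) (Tm.tsub s e₂)
  | .letin x as e₁ e₂ => .letin x as (Tm.tsub (mask s as) e₁) (Tm.tsub s e₂)
  | .op o As e => .op o (As.map (Ty.subst s)) (Tm.tsub s e)
  | .opCont o σs as w E =>
      .opCont o (σs.map (Scheme.subst s)) as (Tm.tsub (mask s as) w) (ECtx.tsubE s E)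
  | .handle e h => .handle (Tm.tsub s e) (Handler.tsubH s h)
  | .resume as x e => .resume as x (Tm.tsub (mask s as) e)

def Handler.tsubH (s : TySubst) : Handler → Handler
  | .ret x e => .ret x (Tm.tsub s e)
  | .opH h as o x e => .opH (Handler.tsubH s h) as o x (Tm.tsub (mask s as) e)

def ECtx.tsubE (s : TySubst) : ECtx → ECtx
  | .hole => .hole
  | .appL E e => .appL (ECtx.tsubE s E) (Tm.tsub s e)
  | .appR v E => .appR (Tm.tsub s v) (ECtx.tsubE s E)
  | .letE x as E e => .letE x as (ECtx.tsubE (mask s as) E) (Tm.tsub s e)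
  | .opE o As E => .opE o (As.map (Ty.subst s)) (ECtx.tsubE s E)
  | .handleE E h => .handleE (ECtx.tsubE s E) (Handler.tsubH s h)
end

mutual
/-- Substitution `e[Λᾱ.v/x]` of a polymorphic value for a term variable, with
`(x Ā)[Λᾱ.v/x] = v[Ā/ᾱ]`. -/
def Tm.vsub (x : ℕ) (as : List ℕ) (v : Tm) : Tm → Tm
  | .var y Bs => if y = x then Tm.tsub (subList as Bs) v else .var y Bs
  | .const c => .const c
  | .abs y e => .abs y (if y = x then e else Tm.vsub x as v e)
  | .app e₁ e₂ => .app (Tm.vsub x as v e₁) (Tm.vsub x as v e₂)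
  | .letin y bs e₁ e₂ =>
      .letin y bs (Tm.vsub x as v e₁) (if y = x then e₂ else Tm.vsub x as v e₂)
  | .op o As e => .op o As (Tm.vsub x as v e)
  | .opCont o σs bs w E => .opCont o σs bs (Tm.vsub x as v w) (ECtx.vsubE x as v E)
  | .handle e h => .handle (Tm.vsub x as v e) (Handler.vsubH x as v h)
  | .resume bs y e => .resume bs y (if y = x then e else Tm.vsub x as v e)

def Handler.vsubH (x : ℕ) (as : List ℕ) (v : Tm) : Handler → Handler
  | .ret y e => .ret y (if y = x then e else Tm.vsub x as v e)
  | .opH h bs o y e =>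
      .opH (Handler.vsubH x as v h) bs o y (if y = x then e else Tm.vsub x as v e)

def ECtx.vsubE (x : ℕ) (as : List ℕ) (v : Tm) : ECtx → ECtx
  | .hole => .hole
  | .appL E e => .appL (ECtx.vsubE x as v E) (Tm.vsub x as v e)
  | .appR w E => .appR (Tm.vsub x as v w) (ECtx.vsubE x as v E)
  | .letE y bs E e =>
      .letE y bs (ECtx.vsubE x as v E) (if y = x then e else Tm.vsub x as v e)
  | .opE o As E => .opE o As (ECtx.vsubE x as v E)
  | .handleE E h => .handleE (ECtx.vsubE x as v E) (Handler.vsubH x as v h)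
end

def ftvList (As : List Ty) : Finset ℕ := As.foldr (fun A s => A.ftv ∪ s) ∅

def ftvSchemes (σs : List Scheme) : Finset ℕ := σs.foldr (fun σ s => σ.ftv ∪ s) ∅

mutual
/-- Free type variables of a term. -/
def Tm.ftv : Tm → Finset ℕ
  | .var _ As => ftvList As
  | .const _ => ∅
  | .abs _ e => Tm.ftv e
  | .app e₁ e₂ => Tm.ftv e₁ ∪ Tm.ftv e₂
  | .letin _ as e₁ e₂ => (Tm.ftv e₁ \ as.toFinset) ∪ Tm.ftv e₂
  | .op _ As e => ftvList As ∪ Tm.ftv e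
  | .opCont _ σs as w E => ftvSchemes σs ∪ (Tm.ftv w \ as.toFinset) ∪ ECtx.ftvE E
  | .handle e h => Tm.ftv e ∪ Handler.ftvH h
  | .resume as _ e => Tm.ftv e \ as.toFinset

def Handler.ftvH : Handler → Finset ℕ
  | .ret _ e => Tm.ftv e
  | .opH h as _ _ e => Handler.ftvH h ∪ (Tm.ftv e \ as.toFinset)

def ECtx.ftvE : ECtx → Finset ℕ
  | .hole => ∅
  | .appL E e => ECtx.ftvE E ∪ Tm.ftv e
  | .appR v E => Tm.ftv v ∪ ECtx.ftvE E
  | .letE _ as E e => (ECtx.ftvE E \ as.toFinset) ∪ Tm.ftv e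
  | .opE _ As E => ftvList As ∪ ECtx.ftvE E
  | .handleE E h => ECtx.ftvE E ∪ Handler.ftvH h
end

mutual
/-- Free term variables of a term. -/
def Tm.fv : Tm → Finset ℕ
  | .var x _ => {x}
  | .const _ => ∅
  | .abs x e => (Tm.fv e).erase x
  | .app e₁ e₂ => Tm.fv e₁ ∪ Tm.fv e₂
  | .letin x _ e₁ e₂ => Tm.fv e₁ ∪ (Tm.fv e₂).erase x
  | .op _ _ e => Tm.fv e
  | .opCont _ _ _ w E => Tm.fv w ∪ ECtx.fvE E
  | .handle e h => Tm.fv e ∪ Handler.fvH h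
  | .resume _ x e => (Tm.fv e).erase x

def Handler.fvH : Handler → Finset ℕ
  | .ret x e => (Tm.fv e).erase x
  | .opH h _ _ x e => Handler.fvH h ∪ (Tm.fv e).erase x

def ECtx.fvE : ECtx → Finset ℕ
  | .hole => ∅
  | .appL E e => ECtx.fvE E ∪ Tm.fv e
  | .appR v E => Tm.fv v ∪ ECtx.fvE E
  | .letE x _ E e => ECtx.fvE E ∪ (Tm.fv e).erase x
  | .opE _ _ E => ECtx.fvE E
  | .handleE E h => ECtx.fvE E ∪ Handler.fvH h
end
/-! ### Continuation substitution -/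

mutual
/-- Continuation substitution `e[Ec/resume]^{∀β̄.C̄}_{Λβ̄.v}` of the paper, as a relation:
`CSub Ec bs Cs v e e'` means that `e'` is the result of substituting the continuation
`Ec` (with binders `bs = β̄`) for resumptions in `e`, with invocation type arguments
`Cs = C̄` and invocation argument `v`. -/
inductive CSub (Ec : ECtx) (bs : List ℕ) (Cs : List Ty) (v : Tm) : Tm → Tm → Prop
  | var : CSub Ec bs Cs v (.var x As) (.var x As)
  | const : CSub Ec bs Cs v (.const c) (.const c)
  | abs : CSub Ec bs Cs v e e' → CSub Ec bs Cs v (.abs x e) (.abs x e')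
  | app : CSub Ec bs Cs v e₁ e₁' → CSub Ec bs Cs v e₂ e₂' →
      CSub Ec bs Cs v (.app e₁ e₂) (.app e₁' e₂')
  | letin : CSub Ec bs Cs v e₁ e₁' → CSub Ec bs Cs v e₂ e₂' →
      CSub Ec bs Cs v (.letin x as e₁ e₂) (.letin x as e₁' e₂')
  | op : CSub Ec bs Cs v e e' → CSub Ec bs Cs v (.op o As e) (.op o As e')
  | opCont : CSub Ec bs Cs v w w' →
      CSub Ec bs Cs v (.opCont o σs as w E) (.opCont o σs as w' E)
  | handle : CSub Ec bs Cs v e e' → CSubH Ec bs Cs v h h' →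
      CSub Ec bs Cs v (.handle e h) (.handle e' h')
  | resume : CSub Ec bs Cs v e e' →
      (Tm.ftv e ∪ ECtx.ftvE Ec) ∩ bs.toFinset = ∅ →
      y ∉ Tm.fv e ∪ Tm.fv e' ∪ ECtx.fvE Ec ∪ Tm.fv v →
      CSub Ec bs Cs v (.resume gs z e)
        (.letin y bs (Tm.vsub z [] v (Tm.tsub (subList gs Cs) e'))
           (ECtx.fill Ec (.var y (bs.map Ty.tvar))))

/-- Continuation substitution on handlers: it applies only to the return clause. -/
inductive CSubH (Ec : ECtx) (bs : List ℕ) (Cs : List Ty) (v : Tm) : Handler → Handler → Prop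
  | ret : CSub Ec bs Cs v e e' → CSubH Ec bs Cs v (.ret x e) (.ret x e')
  | opH : CSubH Ec bs Cs v h h' → CSubH Ec bs Cs v (.opH h as o x e) (.opH h' as o x e)
end

/-! ### Operational semantics of λ_eff^Λ -/

/-- The reduction relation `e₁ ⇝ e₂` of Figure 4. -/
inductive Red (S : Sig) : Tm → Tm → Prop
  | const : S.zeta c₁ c₂ = some c →
      Red S (.app (.const c₁) (.const c₂)) (.const c)
  | beta : IsValue v →
      Red S (.app (.abs x e) v) (Tm.vsub x [] v e)
  | letv : IsValue v →
      Red S (.letin x as v e) (Tm.vsub x as v e)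
  | ret : IsValue v → Handler.retClause h = (x, e) →
      Red S (.handle v h) (Tm.vsub x [] v e)
  | opv : IsValue v →
      Red S (.op o As v) (.opCont o (As.map .ty) [] v .hole)
  | opApp1 :
      Red S (.app (.opCont o σs bs w E) e₂) (.opCont o σs bs w (.appL E e₂))
  | opApp2 : IsValue v₁ →
      Red S (.app v₁ (.opCont o σs bs w E)) (.opCont o σs bs w (.appR v₁ E))
  | opOp :
      Red S (.op o' As (.opCont o σs bs w E)) (.opCont o σs bs w (.opE o' As E))
  | opHandle : o ∉ Handler.ops h →
      Red S (.handle (.opCont o σs bs w E) h) (.opCont o σs bs w (.handleE E h))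
  | opLet :
      Red S (.letin x as (.opCont o σs bs w E) e₂)
        (.opCont o (σs.map (Scheme.allEach as)) (as ++ bs) w (.letE x as E e₂))
  | handle :
      Handler.opClause h o = some (αs, x, e) →
      IsValue v →
      ECtx.binders E = bs →
      CSub (.handleE E h) bs As v e e' →
      Red S (.handle (.opCont o (As.map (Scheme.close bs)) bs v E) h)
        (Tm.vsub x [] (Tm.tsub (botSub bs) v)
          (Tm.tsub (subList αs (As.map (Ty.subst (botSub bs)))) e'))

/-- The evaluation relation `e₁ ⟶ e₂` (rule E-Eval). -/
inductive Eval (S : Sig) : Tm → Tm → Prop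
  | eval : Red S e₁ e₂ → Eval S (ECtx.fill E e₁) (ECtx.fill E e₂)

/-! ### Typing of λ_eff^Λ (Figures 5 and 6) -/

mutual
/-- Term typing `Γ; r ⊢ e : A | ε` of λ_eff^Λ. -/
inductive TmTy (S : Sig) : Ctx → Resum → Tm → Ty → Eff → Prop
  | var : CtxWF Γ → CtxEntry.evar x (Scheme.close as A) ∈ Γ →
      (∀ B ∈ Bs, wfTy Γ B) → Bs.length = as.length →
      TmTy S Γ r (.var x Bs) (A.subst (subList as Bs)) ε
  | const : CtxWF Γ → TmTy S Γ r (.const c) (S.tyc c) ε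
  | abs : TmTy S (.evar x (.ty A) :: Γ) r e B ε' →
      TmTy S Γ r (.abs x e) (.arrow A ε' B) ε
  | app : TmTy S Γ r e₁ (.arrow A ε' B) ε → TmTy S Γ r e₂ A ε → ε' ⊆ ε →
      TmTy S Γ r (.app e₁ e₂) B ε
  | opI : S.opSig o = (as, A, B) → o ∈ ε →
      (∀ C ∈ Cs, wfTy Γ C) → Cs.length = as.length →
      TmTy S Γ r e (A.subst (subList as Cs)) ε →
      TmTy S Γ r (.op o Cs e) (B.subst (subList as Cs)) ε
  | opCont : S.opSig o = (as, A, B) → o ∈ ε →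
      (∀ C ∈ Cs, wfScheme Γ (Scheme.close bs C)) → Cs.length = as.length →
      ECtx.binders E = bs →
      IsValue v →
      TmTy S (tvarsCtx bs ++ Γ) r v (A.subst (subList as Cs)) ε →
      ETy S Γ E (Scheme.close bs (B.subst (subList as Cs))) D ε →
      TmTy S Γ r (.opCont o (Cs.map (Scheme.close bs)) bs v E) D ε
  | weak : TmTy S Γ r e A ε → ε ⊆ ε' → TmTy S Γ r e A ε'
  | handle : TmTy S Γ r e B ε' → HTy S Γ r h B ε' A ε →
      TmTy S Γ r (.handle e h) A ε
  | letin : TmTy S (tvarsCtx as ++ Γ) r e₁ B ε →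
      TmTy S (.evar x (Scheme.close as B) :: Γ) r e₂ A ε →
      TmTy S Γ r (.letin x as e₁ e₂) A ε
  | resume : gs.length = as.length →
      (∀ a ∈ as, CtxEntry.tvar a ∈ Γ) →
      TmTy S (.evar x (.ty (A.subst (subList as (gs.map .tvar)))) :: (tvarsCtx gs ++ Γ))
        (some (as, A, B, ε, D)) e (B.subst (subList as (gs.map .tvar))) ε' →
      ε ⊆ ε' →
      TmTy S Γ (some (as, A, B, ε, D)) (.resume gs x e) D ε'

/-- Handler typing `Γ; r ⊢ h : A | ε ⇒ B | ε'` of λ_eff^Λ. -/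
inductive HTy (S : Sig) : Ctx → Resum → Handler → Ty → Eff → Ty → Eff → Prop
  | ret : TmTy S (.evar x (.ty A) :: Γ) r e B ε' → ε ⊆ ε' →
      HTy S Γ r (.ret x e) A ε B ε'
  | opH : HTy S Γ r h A ε B ε' →
      S.opSig o = (as₀, C₀, D₀) → as.length = as₀.length → o ∉ ε →
      TmTy S (.evar x (.ty (C₀.subst (subList as₀ (as.map .tvar)))) :: (tvarsCtx as ++ Γ))
        (some (as, C₀.subst (subList as₀ (as.map .tvar)),
               D₀.subst (subList as₀ (as.map .tvar)), ε', B)) e B ε' →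
      HTy S Γ r (.opH h as o x e) A (insert o ε) B ε'

/-- Continuation typing `Γ ⊢ E : σ ⊸ A | ε` of λ_eff^Λ. -/
inductive ETy (S : Sig) : Ctx → ECtx → Scheme → Ty → Eff → Prop
  | hole : CtxWF Γ → ETy S Γ .hole (.ty A) A ε
  | appL : ETy S Γ E σ (.arrow A ε' B) ε → TmTy S Γ none e₂ A ε → ε' ⊆ ε →
      ETy S Γ (.appL E e₂) σ B ε
  | appR : IsValue v → TmTy S Γ none v (.arrow A ε' B) ε → ETy S Γ E σ A ε → ε' ⊆ ε →
      ETy S Γ (.appR v E) σ B ε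
  | opE : S.opSig o = (as, A, B) → o ∈ ε →
      (∀ C ∈ Cs, wfTy Γ C) → Cs.length = as.length →
      ETy S Γ E σ (A.subst (subList as Cs)) ε →
      ETy S Γ (.opE o Cs E) σ (B.subst (subList as Cs)) ε
  | handleE : ETy S Γ E σ B ε' → HTy S Γ none h B ε' A ε →
      ETy S Γ (.handleE E h) σ A ε
  | weak : ETy S Γ E σ A ε → ε ⊆ ε' → ETy S Γ E σ A ε'
  | letE : ETy S (tvarsCtx as ++ Γ) E σ B ε →
      TmTy S (.evar x (Scheme.close as B) :: Γ) none e A ε →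
      ETy S Γ (.letE x as E e) (Scheme.allEach as σ) A ε
end
/-! ## The surface language λ_eff^let -/

mutual
/-- Terms of `λ_eff^let`. -/
inductive STm : Type
  | var    : ℕ → STm
  | const  : ℕ → STm
  | abs    : ℕ → STm → STm
  | app    : STm → STm → STm
  | letin  : ℕ → STm → STm → STm
  | op     : ℕ → STm → STm
  | handle : STm → SHandler → STm
  | resume : STm → STm

/-- Handlers of `λ_eff^let`. -/
inductive SHandler : Type
  | ret : ℕ → STm → SHandler
  | opH : SHandler → ℕ → ℕ → STm → SHandler
end

/-- Surface resumption types `R ::= none | (ᾱ, x : A, B →ε C)`. -/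
abbrev SResum := Option (List ℕ × ℕ × Ty × Ty × Eff × Ty)

/-- Elaboration `R ⤳ r` of resumption types (dropping the bound variable). -/
def elabR : SResum → Resum
  | none => none
  | some (as, _, A, B, ε, C) => some (as, A, B, ε, C)

mutual
/-- Term typing `Γ; R ⊢ M : A | ε` of λ_eff^let (Figure 2). -/
inductive STmTy (S : Sig) : Ctx → SResum → STm → Ty → Eff → Prop
  | var : CtxWF Γ → CtxEntry.evar x (Scheme.close as A) ∈ Γ →
      (∀ B ∈ Bs, wfTy Γ B) → Bs.length = as.length →
      STmTy S Γ R (.var x) (A.subst (subList as Bs)) ε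
  | const : CtxWF Γ → STmTy S Γ R (.const c) (S.tyc c) ε
  | abs : STmTy S (.evar x (.ty A) :: Γ) R M B ε' →
      STmTy S Γ R (.abs x M) (.arrow A ε' B) ε
  | app : STmTy S Γ R M₁ (.arrow A ε' B) ε → STmTy S Γ R M₂ A ε → ε' ⊆ ε →
      STmTy S Γ R (.app M₁ M₂) B ε
  | letin : STmTy S (tvarsCtx as ++ Γ) R M₁ B ε →
      STmTy S (.evar x (Scheme.close as B) :: Γ) R M₂ A ε →
      STmTy S Γ R (.letin x M₁ M₂) A ε
  | weak : STmTy S Γ R M A ε → ε ⊆ ε' → STmTy S Γ R M A ε'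
  | op : S.opSig o = (as, A, B) → o ∈ ε →
      (∀ C ∈ Cs, wfTy Γ C) → Cs.length = as.length →
      STmTy S Γ R M (A.subst (subList as Cs)) ε →
      STmTy S Γ R (.op o M) (B.subst (subList as Cs)) ε
  | handle : STmTy S Γ R M B ε' → SHTy S Γ R H B ε' A ε →
      STmTy S Γ R (.handle M H) A ε
  | resume :
      CtxWF (Γ₂ ++ .evar x (.ty D) :: Γ₁) →
      (∀ a ∈ as, CtxEntry.tvar a ∈ Γ₁) →
      bs.length = as.length →
      STmTy S (.evar x (.ty (A.subst (subList as (bs.map .tvar)))) ::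
                 (tvarsCtx bs ++ (Γ₂ ++ Γ₁)))
        (some (as, x, A, B, ε₀, C)) M (B.subst (subList as (bs.map .tvar))) ε →
      ε₀ ⊆ ε →
      STmTy S (Γ₂ ++ .evar x (.ty D) :: Γ₁) (some (as, x, A, B, ε₀, C)) (.resume M) C ε

/-- Handler typing `Γ; R ⊢ H : A | ε ⇒ B | ε'` of λ_eff^let (Figure 2). -/
inductive SHTy (S : Sig) : Ctx → SResum → SHandler → Ty → Eff → Ty → Eff → Prop
  | ret : STmTy S (.evar x (.ty A) :: Γ) R M B ε' → ε ⊆ ε' →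
      SHTy S Γ R (.ret x M) A ε B ε'
  | opH : SHTy S Γ R H A ε B ε' → S.opSig o = (as, C, D) → o ∉ ε →
      STmTy S (.evar x (.ty C) :: (tvarsCtx as ++ Γ)) (some (as, x, C, D, ε', B)) M B ε' →
      SHTy S Γ R (.opH H o x M) A (insert o ε) B ε'
end

/-! ## Elaboration from λ_eff^let to λ_eff^Λ (Figure 7) -/

mutual
/-- Elaboration `Γ; R ⊢ M : A | ε ⤳_m e` of λ_eff^let typing derivations to λ_eff^Λ
terms, where `m` maps surface variables to intermediate variables. -/
inductive Elab (S : Sig) : Ctx → SResum → STm → Ty → Eff → (ℕ → ℕ) → Tm → Prop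
  | var : CtxWF Γ → CtxEntry.evar x (Scheme.close as A) ∈ Γ →
      (∀ B ∈ Bs, wfTy Γ B) → Bs.length = as.length →
      Elab S Γ R (.var x) (A.subst (subList as Bs)) ε m (.var (m x) Bs)
  | const : CtxWF Γ → Elab S Γ R (.const c) (S.tyc c) ε m (.const c)
  | abs : Elab S (.evar x (.ty A) :: Γ) R M B ε' (Function.update m x y) e →
      Elab S Γ R (.abs x M) (.arrow A ε' B) ε m (.abs y e)
  | app : Elab S Γ R M₁ (.arrow A ε' B) ε m e₁ → Elab S Γ R M₂ A ε m e₂ → ε' ⊆ ε →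
      Elab S Γ R (.app M₁ M₂) B ε m (.app e₁ e₂)
  | letin : Elab S (tvarsCtx as ++ Γ) R M₁ B ε m e₁ →
      Elab S (.evar x (Scheme.close as B) :: Γ) R M₂ A ε (Function.update m x y) e₂ →
      Elab S Γ R (.letin x M₁ M₂) A ε m (.letin y as e₁ e₂)
  | weak : Elab S Γ R M A ε m e → ε ⊆ ε' → Elab S Γ R M A ε' m e
  | op : S.opSig o = (as, A, B) → o ∈ ε →
      (∀ C ∈ Cs, wfTy Γ C) → Cs.length = as.length →
      Elab S Γ R M (A.subst (subList as Cs)) ε m e →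
      Elab S Γ R (.op o M) (B.subst (subList as Cs)) ε m (.op o Cs e)
  | handle : Elab S Γ R M B ε' m e → ElabH S Γ R H B ε' A ε m h →
      Elab S Γ R (.handle M H) A ε m (.handle e h)
  | resume :
      CtxWF (Γ₂ ++ .evar x (.ty D) :: Γ₁) →
      (∀ a ∈ as, CtxEntry.tvar a ∈ Γ₁) →
      bs.length = as.length →
      Elab S (.evar x (.ty (A.subst (subList as (bs.map .tvar)))) ::
                (tvarsCtx bs ++ (Γ₂ ++ Γ₁)))
        (some (as, x, A, B, ε₀, C)) M (B.subst (subList as (bs.map .tvar))) ε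
        (Function.update m x y) e →
      ε₀ ⊆ ε →
      Elab S (Γ₂ ++ .evar x (.ty D) :: Γ₁) (some (as, x, A, B, ε₀, C)) (.resume M) C ε m
        (.resume bs y e)

/-- Elaboration `Γ; R ⊢ H : A | ε ⇒ B | ε' ⤳_m h` of handler typing derivations. -/
inductive ElabH (S : Sig) :
    Ctx → SResum → SHandler → Ty → Eff → Ty → Eff → (ℕ → ℕ) → Handler → Prop
  | ret : Elab S (.evar x (.ty A) :: Γ) R M B ε' (Function.update m x y) e → ε ⊆ ε' →
      ElabH S Γ R (.ret x M) A ε B ε' m (.ret y e)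
  | opH : ElabH S Γ R H A ε B ε' m h → S.opSig o = (as, C, D) → o ∉ ε →
      Elab S (.evar x (.ty C) :: (tvarsCtx as ++ Γ)) (some (as, x, C, D, ε', B)) M B ε'
        (Function.update m x y) e →
      ElabH S Γ R (.opH H o x M) A (insert o ε) B ε' m (.opH h as o y e)
end

/-- Elaboration `Γ ⤳_m Γ'` of typing contexts. -/
inductive ElabCtx : Ctx → (ℕ → ℕ) → Ctx → Prop
  | nil : ElabCtx [] id []
  | evar : ElabCtx Γ m Γ' →
      ElabCtx (.evar x σ :: Γ) (Function.update m x y) (.evar y σ :: Γ')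
  | tvar : ElabCtx Γ m Γ' → ElabCtx (.tvar a :: Γ) m (.tvar a :: Γ')

/-!
Induction on the continuation typing derivation: each rule for `E` is mirrored by the term
rule for `E[e]`, with the derivation for the hole plugged in. The only subtlety is `let`: the
type variables bound by the `let` are declared before those bound inside `E`, so the context of
`e` has to be permuted, which is harmless because typing is invariant under permutations of the
context that preserve its well-formedness (exchange).
-/
theorem Ctx.mem_tvars {Γ : Ctx} {a : ℕ} : a ∈ Ctx.tvars Γ ↔ CtxEntry.tvar a ∈ Γ := by
  induction Γ with
  | nil => simp [Ctx.tvars]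
  | cons it Γ ih =>
    cases it with
    | evar x σ => simpa [Ctx.tvars] using ih
    | tvar b =>
      change a ∈ insert b (Ctx.tvars Γ) ↔ _
      simp [ih]

theorem Ctx.dom_append (Δ Γ : Ctx) : Ctx.dom (Δ ++ Γ) = Ctx.dom Δ ∪ Ctx.dom Γ := by
  simp [Ctx.dom]

theorem Ctx.mem_dom_tvarsCtx {a : ℕ} {cs : List ℕ} :
    Sum.inr a ∈ Ctx.dom (tvarsCtx cs) ↔ a ∈ cs := by
  simp [Ctx.dom, tvarsCtx, CtxEntry.domE]

theorem ctxWF_tvar_cons_iff {a : ℕ} {Γ : Ctx} :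
    CtxWF (.tvar a :: Γ) ↔ CtxWF Γ ∧ Sum.inr a ∉ Ctx.dom Γ :=
  ⟨fun | .tvar h₁ h₂ => ⟨h₁, h₂⟩, fun ⟨h₁, h₂⟩ => .tvar h₁ h₂⟩

theorem ctxWF_tvarsCtx_append_iff {cs : List ℕ} {Γ : Ctx} :
    CtxWF (tvarsCtx cs ++ Γ) ↔
      CtxWF Γ ∧ cs.Nodup ∧ ∀ a ∈ cs, Sum.inr a ∉ Ctx.dom Γ := by
  induction cs with
  | nil => simp [tvarsCtx]
  | cons c cs ih =>
    change CtxWF (.tvar c :: (tvarsCtx cs ++ Γ)) ↔ _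
    simp only [ctxWF_tvar_cons_iff, ih, Ctx.dom_append, Finset.mem_union,
      Ctx.mem_dom_tvarsCtx, List.nodup_cons, List.mem_cons, forall_eq_or_imp]
    tauto

/-- Not every permutation keeps `CtxWF` (a scheme may move above the type variables it
mentions), so a reordering carries its own well-formedness transfer. -/
structure Ctx.Reordering (Γ Γ' : Ctx) : Prop where
  perm : Γ.Perm Γ'
  wf : CtxWF Γ → CtxWF Γ'

namespace Ctx.Reordering

variable {Γ Γ' : Ctx}

theorem tvars (h : Reordering Γ Γ') : Ctx.tvars Γ = Ctx.tvars Γ' := by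
  ext a
  simp only [Ctx.mem_tvars, h.perm.mem_iff]

theorem dom (h : Reordering Γ Γ') : Ctx.dom Γ = Ctx.dom Γ' :=
  List.toFinset_eq_of_perm _ _ (h.perm.map CtxEntry.domE)

theorem mem (h : Reordering Γ Γ') {it : CtxEntry} (hit : it ∈ Γ) : it ∈ Γ' :=
  h.perm.mem_iff.mp hit

theorem wfTy (h : Reordering Γ Γ') {A : Ty} (hA : EffLam.wfTy Γ A) : EffLam.wfTy Γ' A :=
  fun _ ha => h.tvars ▸ hA ha

theorem wfScheme (h : Reordering Γ Γ') {σ : Scheme} (hσ : EffLam.wfScheme Γ σ) :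
    EffLam.wfScheme Γ' σ :=
  fun _ ha => h.tvars ▸ hσ ha

theorem cons (h : Reordering Γ Γ') (it : CtxEntry) : Reordering (it :: Γ) (it :: Γ') where
  perm := h.perm.cons it
  wf
    | .evar hΓ hσ hx => .evar (h.wf hΓ) (h.wfScheme hσ) (h.dom ▸ hx)
    | .tvar hΓ ha => .tvar (h.wf hΓ) (h.dom ▸ ha)

theorem append (h : Reordering Γ Γ') (Δ : Ctx) : Reordering (Δ ++ Γ) (Δ ++ Γ') := by
  induction Δ with
  | nil => exact h
  | cons it Δ ih => exact ih.cons it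

theorem tvarsCtx_append {cs cs' : List ℕ} (hcs : cs.Perm cs') (Γ : Ctx) :
    Reordering (tvarsCtx cs ++ Γ) (tvarsCtx cs' ++ Γ) where
  perm := (hcs.map _).append_right Γ
  wf hwf := by
    rw [ctxWF_tvarsCtx_append_iff] at hwf ⊢
    exact ⟨hwf.1, hcs.nodup_iff.mp hwf.2.1, fun a ha => hwf.2.2 a (hcs.mem_iff.mpr ha)⟩

end Ctx.Reordering

section Exchange

variable {S : Sig}

mutual

theorem TmTy.reorder {Γ Γ' : Ctx} {r : Resum} {e : Tm} {A : Ty} {ε : Eff} :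
    TmTy S Γ r e A ε → Ctx.Reordering Γ Γ' → TmTy S Γ' r e A ε
  | .var hwf hx hBs hlen, h => .var (h.wf hwf) (h.mem hx) (fun B hB => h.wfTy (hBs B hB)) hlen
  | .const hwf, h => .const (h.wf hwf)
  | .abs he, h => .abs (he.reorder (h.cons _))
  | .app he₁ he₂ hsub, h => .app (he₁.reorder h) (he₂.reorder h) hsub
  | .opI hsig ho hCs hlen he, h =>
    .opI hsig ho (fun C hC => h.wfTy (hCs C hC)) hlen (he.reorder h)
  | .opCont hsig ho hCs hlen hbs hv hv' hE, h =>
    .opCont hsig ho (fun C hC => h.wfScheme (hCs C hC)) hlen hbs hv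
      (hv'.reorder (h.append _)) (hE.reorder h)
  | .weak he hsub, h => .weak (he.reorder h) hsub
  | .handle he hh, h => .handle (he.reorder h) (hh.reorder h)
  | .letin he₁ he₂, h => .letin (he₁.reorder (h.append _)) (he₂.reorder (h.cons _))
  | .resume hlen has he hsub, h =>
    .resume hlen (fun a ha => h.mem (has a ha)) (he.reorder ((h.append _).cons _)) hsub

theorem HTy.reorder {Γ Γ' : Ctx} {r : Resum} {hd : Handler} {A B : Ty} {ε ε' : Eff} :
    HTy S Γ r hd A ε B ε' → Ctx.Reordering Γ Γ' → HTy S Γ' r hd A ε B ε'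
  | .ret he hsub, h => .ret (he.reorder (h.cons _)) hsub
  | .opH hh hsig hlen ho he, h =>
    .opH (hh.reorder h) hsig hlen ho (he.reorder ((h.append _).cons _))

theorem ETy.reorder {Γ Γ' : Ctx} {E : ECtx} {σ : Scheme} {A : Ty} {ε : Eff} :
    ETy S Γ E σ A ε → Ctx.Reordering Γ Γ' → ETy S Γ' E σ A ε
  | .hole hwf, h => .hole (h.wf hwf)
  | .appL hE he hsub, h => .appL (hE.reorder h) (he.reorder h) hsub
  | .appR hv he hE hsub, h => .appR hv (he.reorder h) (hE.reorder h) hsub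
  | .opE hsig ho hCs hlen hE, h =>
    .opE hsig ho (fun C hC => h.wfTy (hCs C hC)) hlen (hE.reorder h)
  | .handleE hE hh, h => .handleE (hE.reorder h) (hh.reorder h)
  | .weak hE hsub, h => .weak (hE.reorder h) hsub
  | .letE hE he, h => .letE (hE.reorder (h.append _)) (he.reorder (h.cons _))

end

end Exchange

theorem Scheme.allEach_injective (as : List ℕ) : Function.Injective (Scheme.allEach as) := by
  induction as with
  | nil => exact fun _ _ h => h
  | cons a as ih => exact fun _ _ h => ih (Scheme.all.inj h).2

theorem Scheme.close_append (as bs : List ℕ) (A : Ty) :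
    Scheme.close (as ++ bs) A = Scheme.allEach as (Scheme.close bs A) := by
  simp [Scheme.close, Scheme.allEach, List.foldr_append]

theorem tvarsCtx_append (as bs : List ℕ) : tvarsCtx (as ++ bs) = tvarsCtx as ++ tvarsCtx bs :=
  List.map_append

theorem ETy.fill {S : Sig} {Γ : Ctx} {E : ECtx} {σ : Scheme} {B : Ty} {ε : Eff} :
    ETy S Γ E σ B ε → ∀ {A : Ty} {e : Tm}, σ = Scheme.close E.binders A →
      TmTy S (tvarsCtx E.binders ++ Γ) none e A ∅ → TmTy S Γ none (E.fill e) B ε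
  | .hole _, _, _, hσ, he => by
    cases hσ
    exact he.weak (Finset.empty_subset _)
  | .appL hE he₂ hsub, _, _, hσ, he => .app (hE.fill hσ he) he₂ hsub
  | .appR _ hv hE hsub, _, _, hσ, he => .app hv (hE.fill hσ he) hsub
  | .opE hsig ho hCs hlen hE, _, _, hσ, he => .opI hsig ho hCs hlen (hE.fill hσ he)
  | .handleE hE hh, _, _, hσ, he => .handle (hE.fill hσ he) hh
  | .weak hE hsub, _, _, hσ, he => .weak (hE.fill hσ he) hsub
  | .letE (as := as) (E := E) hE he₂, _, _, hσ, he => by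
    rw [ECtx.binders, Scheme.close_append] at hσ
    rw [ECtx.binders] at he
    -- `binders` lists the `let`'s variables first, but `E` is typed with its own on top
    have he' := he.reorder (Ctx.Reordering.tvarsCtx_append List.perm_append_comm Γ)
    rw [tvarsCtx_append, List.append_assoc] at he'
    exact .letin (hE.fill (Scheme.allEach_injective as hσ) he') he₂

/-- **Evaluation-context placement for λ_eff^Λ**: if `Γ ⊢ E^ᾱ : ∀ᾱ.A ⊸ B | ε` and
`Γ, ᾱ; none ⊢ e : A | ⟨⟩`, then `Γ; none ⊢ E^ᾱ[e] : B | ε`. -/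
theorem ectx_placement (S : Sig) (Γ : Ctx) (E : ECtx) (as : List ℕ) (A B : Ty) (ε : Eff)
    (e : Tm)
    (hbind : ECtx.binders E = as)
    (hE : ETy S Γ E (Scheme.close as A) B ε)
    (he : TmTy S (tvarsCtx as ++ Γ) none e A ∅) :
    TmTy S Γ none (ECtx.fill E e) B ε := by
  subst hbind
  exact hE.fill rfl he

end EffLam
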